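/- arXiv:2011.07612 — 4 statements merged into one kernel-verified Lean document; each statement's English description precedes it below -/
import Mathlib

section
/- Let $U$, $V$, $W$ be disjoint vertex sets with $|V| = n$ and $n/2 \le |U| = |W| = n_0 \le 3n/2$, and let $G$ be a graph in which the pairs $(V,U)$ and $(V,W)$ are $(\varepsilon,d)$-super-regular with $\varepsilon \le d/2$. Define the auxiliary bipartite graph $F$ on $U \cup W$ where $uw$ is an edge if and only if $u$ and $w$ have at least $d^2 n/2$ common neighbours in $V$ in the graph $G$. Then $F$ has minimum degree at least $(1-\varepsilon)n_0$. -/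
open Finset

/-- The density of a pair of vertex sets. -/
noncomputable def edgeDens {α : Type} [Fintype α] [DecidableEq α]
    (G : SimpleGraph α) [DecidableRel G.Adj] (X Y : Finset α) : ℝ :=
  (∑ v ∈ X, (((G.neighborFinset v) ∩ Y).card : ℝ)) / ((X.card : ℝ) * (Y.card : ℝ))

/-!
Fix `u ∈ U` and let `X = N(u) ∩ V`, so `|X| ≥ dn ≥ εn`. If more than `εn₀` vertices of `W` had
fewer than `d|X|` neighbours in `X`, they would form, together with `X`, a pair of density
below `d`, contradicting regularity. Every other `w ∈ W` has at least `d|X| ≥ d²n` common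
neighbours with `u` in `V`.
-/

namespace SimpleGraph

variable {α : Type} [Fintype α] [DecidableEq α] (G : SimpleGraph α) [DecidableRel G.Adj]

theorem sum_card_neighborFinset_inter_comm (X Y : Finset α) :
    ∑ v ∈ X, #(G.neighborFinset v ∩ Y) = ∑ w ∈ Y, #(G.neighborFinset w ∩ X) := by
  have hinter : ∀ (v : α) (Y : Finset α), G.neighborFinset v ∩ Y = Y.bipartiteAbove G.Adj v := by
    intro v Y
    ext w
    simp [bipartiteAbove, and_comm]
  simp_rw [hinter]
  rw [sum_card_bipartiteAbove_eq_sum_card_bipartiteBelow]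
  refine sum_congr rfl fun w _ => congrArg card ?_
  ext v
  simp [bipartiteAbove, bipartiteBelow, G.adj_comm]

theorem edgeDens_comm (X Y : Finset α) : edgeDens G X Y = edgeDens G Y X := by
  rw [edgeDens, edgeDens, mul_comm (#X : ℝ)]
  congr 1
  exact_mod_cast G.sum_card_neighborFinset_inter_comm X Y

theorem one_sub_mul_card_le_card_filter_le_card_neighborFinset_inter
    {X T : Finset α} {ε d : ℝ} (hε : 0 ≤ ε)
    (hreg : ∀ Y ⊆ T, ε * #T ≤ #Y → d ≤ edgeDens G X Y) :
    (1 - ε) * #T ≤ #(T.filter fun t => d * #X ≤ #(G.neighborFinset t ∩ X)) := by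
  by_contra! hfew
  set B := T.filter fun t => ¬ d * #X ≤ #(G.neighborFinset t ∩ X)
  have hsplit : (#(T.filter fun t => d * #X ≤ #(G.neighborFinset t ∩ X)) : ℝ) + #B = #T := by
    exact_mod_cast card_filter_add_card_filter_not _
  have hB : ε * #T < #B := by linarith
  have hBne : B.Nonempty :=
    card_pos.mp (by exact_mod_cast (by positivity : (0 : ℝ) ≤ ε * #T).trans_lt hB)
  have hsparse : ∀ t ∈ B, (#(G.neighborFinset t ∩ X) : ℝ) < d * #X :=
    fun t ht => not_le.mp (mem_filter.mp ht).2
  have hX : (0 : ℝ) < #X := by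
    obtain ⟨t, ht⟩ := hBne
    have hpos : 0 < d * #X := (Nat.cast_nonneg _).trans_lt (hsparse t ht)
    exact (Nat.cast_nonneg _).lt_of_ne fun h => by simp [← h] at hpos
  have hsum : ∑ t ∈ B, (#(G.neighborFinset t ∩ X) : ℝ) < #B * (d * #X) := by
    simpa using sum_lt_sum_of_nonempty hBne hsparse
  have hdens := hreg B (filter_subset _ _) hB.le
  rw [G.edgeDens_comm, edgeDens, le_div_iff₀ (by positivity)] at hdens
  linarith

theorem one_sub_mul_card_le_card_filter_le_card_commonNeighbors_inter
    {V T : Finset α} {ε d c : ℝ} (hε : 0 ≤ ε) (hεd : ε ≤ d)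
    (hreg : ∀ X ⊆ V, ∀ Y ⊆ T, ε * #V ≤ #X → ε * #T ≤ #Y → d ≤ edgeDens G X Y)
    {x : α} (hx : d * #V ≤ #(G.neighborFinset x ∩ V)) (hc : c ≤ d ^ 2 * #V) :
    (1 - ε) * #T ≤ #(T.filter fun t => c ≤ #(G.neighborFinset x ∩ G.neighborFinset t ∩ V)) := by
  set X := G.neighborFinset x ∩ V
  have hd : 0 ≤ d := hε.trans hεd
  have hXlarge : ε * #V ≤ #X := (mul_le_mul_of_nonneg_right hεd (Nat.cast_nonneg _)).trans hx
  have hdense (t : α) (ht : d * #X ≤ #(G.neighborFinset t ∩ X)) :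
      c ≤ #(G.neighborFinset x ∩ G.neighborFinset t ∩ V) := by
    calc c ≤ d * (d * #V) := by linarith
      _ ≤ d * #X := mul_le_mul_of_nonneg_left hx hd
      _ ≤ #(G.neighborFinset t ∩ X) := ht
      _ = #(G.neighborFinset x ∩ G.neighborFinset t ∩ V) := by
        rw [inter_left_comm, inter_assoc]
  calc (1 - ε) * #T ≤ #(T.filter fun t => d * #X ≤ #(G.neighborFinset t ∩ X)) :=
        G.one_sub_mul_card_le_card_filter_le_card_neighborFinset_inter hε
          fun Y hY hYlarge => hreg X inter_subset_right Y hY hXlarge hYlarge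
    _ ≤ _ := by
      exact_mod_cast card_le_card (monotone_filter_right _ fun t _ => hdense t)

end SimpleGraph

theorem stmt_10_general {α : Type} [Fintype α] [DecidableEq α]
    (G : SimpleGraph α) [DecidableRel G.Adj]
    (U V W : Finset α) (n n0 : ℕ) (ε d : ℝ)
    (hVcard : V.card = n) (hUcard : U.card = n0) (hWcard : W.card = n0)
    (hε : 0 < ε) (hεd : ε ≤ d / 2)
    -- (V,U) is (ε,d)-super-regular
    (hregVU : ∀ X ⊆ V, ∀ Y ⊆ U, ε * V.card ≤ X.card → ε * U.card ≤ Y.card →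
      d ≤ edgeDens G X Y)
    (hdegUV : ∀ u ∈ U, d * V.card ≤ (((G.neighborFinset u) ∩ V).card : ℝ))
    -- (V,W) is (ε,d)-super-regular
    (hregVW : ∀ X ⊆ V, ∀ Y ⊆ W, ε * V.card ≤ X.card → ε * W.card ≤ Y.card →
      d ≤ edgeDens G X Y)
    (hdegWV : ∀ w ∈ W, d * V.card ≤ (((G.neighborFinset w) ∩ V).card : ℝ)) :
    (∀ u ∈ U, (1 - ε) * n0 ≤
      ((W.filter (fun w => d ^ 2 * n / 2 ≤
        (((G.neighborFinset u) ∩ (G.neighborFinset w) ∩ V).card : ℝ))).card : ℝ)) ∧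
    (∀ w ∈ W, (1 - ε) * n0 ≤
      ((U.filter (fun u => d ^ 2 * n / 2 ≤
        (((G.neighborFinset u) ∩ (G.neighborFinset w) ∩ V).card : ℝ))).card : ℝ)) := by
  subst hVcard hUcard
  have hεd' : ε ≤ d := by linarith
  have hthreshold : d ^ 2 * #V / 2 ≤ d ^ 2 * #V := half_le_self (by positivity)
  refine ⟨fun u hu => ?_, fun w hw => ?_⟩
  · rw [← hWcard]
    exact G.one_sub_mul_card_le_card_filter_le_card_commonNeighbors_inter hε.le hεd' hregVW
      (hdegUV u hu) hthreshold
  · simp_rw [inter_comm (G.neighborFinset _) (G.neighborFinset w)]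
    exact G.one_sub_mul_card_le_card_filter_le_card_commonNeighbors_inter hε.le hεd' hregVU
      (hdegWV w hw) hthreshold

/-- Let `U,V,W` be disjoint sets with `|V| = n`, `n/2 ≤ |U| = |W| = n₀ ≤ 3n/2`,
with `(V,U)` and `(V,W)` `(ε,d)`-super-regular, `ε ≤ d/2`. In the auxiliary
bipartite graph `F` on `U ∪ W`, where `uw` is an edge iff `u` and `w` have at
least `d²n/2` common neighbours in `V`, every vertex has degree at least
`(1-ε)n₀`. -/
theorem stmt_10 {α : Type} [Fintype α] [DecidableEq α]
    (G : SimpleGraph α) [DecidableRel G.Adj]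
    (U V W : Finset α) (n n0 : ℕ) (ε d : ℝ)
    (hUV : Disjoint U V) (hUW : Disjoint U W) (hVW : Disjoint V W)
    (hVcard : V.card = n) (hUcard : U.card = n0) (hWcard : W.card = n0)
    (hn1 : n ≤ 2 * n0) (hn2 : 2 * n0 ≤ 3 * n)
    (hε : 0 < ε) (hεd : ε ≤ d / 2)
    -- (V,U) is (ε,d)-super-regular
    (hregVU : ∀ X ⊆ V, ∀ Y ⊆ U, ε * V.card ≤ X.card → ε * U.card ≤ Y.card →
      d ≤ edgeDens G X Y)
    (hdegVU : ∀ v ∈ V, d * U.card ≤ (((G.neighborFinset v) ∩ U).card : ℝ))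
    (hdegUV : ∀ u ∈ U, d * V.card ≤ (((G.neighborFinset u) ∩ V).card : ℝ))
    -- (V,W) is (ε,d)-super-regular
    (hregVW : ∀ X ⊆ V, ∀ Y ⊆ W, ε * V.card ≤ X.card → ε * W.card ≤ Y.card →
      d ≤ edgeDens G X Y)
    (hdegVW : ∀ v ∈ V, d * W.card ≤ (((G.neighborFinset v) ∩ W).card : ℝ))
    (hdegWV : ∀ w ∈ W, d * V.card ≤ (((G.neighborFinset w) ∩ V).card : ℝ)) :
    (∀ u ∈ U, (1 - ε) * n0 ≤
      ((W.filter (fun w => d ^ 2 * n / 2 ≤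
        (((G.neighborFinset u) ∩ (G.neighborFinset w) ∩ V).card : ℝ))).card : ℝ)) ∧
    (∀ w ∈ W, (1 - ε) * n0 ≤
      ((U.filter (fun u => d ^ 2 * n / 2 ≤
        (((G.neighborFinset u) ∩ (G.neighborFinset w) ∩ V).card : ℝ))).card : ℝ)) :=
  stmt_10_general G U V W n n0 ε d hVcard hUcard hWcard hε hεd hregVU hdegUV hregVW hdegWV
end

section
/- Let $R$ be a graph on $t$ vertices with minimum degree $\delta(R) \ge (\alpha-2d)t$ where $1/3 - d/3 \le \alpha \le 1/3$ and $d > 0$ small, and let $M_1$ be a maximum matching in $R$ with $|M_1| \ge (\alpha+2d)t$. Then the set $V(R) \setminus V(M_1)$ is independent, has size at most $(\alpha-3d)t$, and there exists a matching $M_2$, vertex-disjoint edges each joining a vertex of $V(R)\setminus V(M_1)$ to a vertex of $V(M_1)$, covering all of $V(R) \setminus V(M_1)$. -/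
/-!
Maximality of `M₁` forbids edges between uncovered vertices, and counting vertices gives
`|U| = t - 2|M₁| ≤ (1 - 2α - 4d)t ≤ (α - 3d)t` for the uncovered set `U`. So every vertex of `U`
has all of its at least `(α - 2d)t ≥ |U|` neighbours in `V(M₁)`; Hall's condition for `U` holds
because a single neighbourhood is already large enough, and Hall's theorem matches `U` into `V(M₁)`.
-/

open Finset

variable {V : Type*}

def PairwiseVertexDisjoint (M : Finset (Sym2 V)) : Prop :=
  (M : Set (Sym2 V)).Pairwise (fun e f => ∀ v : V, v ∈ e → v ∉ f)

variable [DecidableEq V]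

def uncovered [Fintype V] (M : Finset (Sym2 V)) : Finset V :=
  univ.filter fun v => ∀ e ∈ M, v ∉ e

lemma mem_uncovered [Fintype V] {M : Finset (Sym2 V)} {v : V} :
    v ∈ uncovered M ↔ ∀ e ∈ M, v ∉ e := by
  simp [uncovered]

lemma PairwiseVertexDisjoint.insert_mk {M : Finset (Sym2 V)} (hM : PairwiseVertexDisjoint M)
    {u v : V} (hu : ∀ e ∈ M, u ∉ e) (hv : ∀ e ∈ M, v ∉ e) :
    PairwiseVertexDisjoint (insert s(u, v) M) := by
  have hfresh : ∀ f ∈ M, ∀ w ∈ s(u, v), w ∉ f := by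
    intro f hf w hw
    rcases Sym2.mem_iff.mp hw with rfl | rfl
    exacts [hu f hf, hv f hf]
  rw [PairwiseVertexDisjoint, coe_insert]
  exact hM.insert fun f hf _ => ⟨hfresh f hf, fun w hwf hw => hfresh f hf w hw hwf⟩

lemma PairwiseVertexDisjoint.pairwiseDisjoint_toFinset {M : Finset (Sym2 V)}
    (hM : PairwiseVertexDisjoint M) : (M : Set (Sym2 V)).PairwiseDisjoint Sym2.toFinset :=
  fun _ he _ hf hef => disjoint_left.mpr fun v hve hvf =>
    hM he hf hef v (Sym2.mem_toFinset.mp hve) (Sym2.mem_toFinset.mp hvf)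

lemma card_uncovered_add_two_mul_card [Fintype V] {M : Finset (Sym2 V)}
    (hM : PairwiseVertexDisjoint M) (hdiag : ∀ e ∈ M, ¬ e.IsDiag) :
    #(uncovered M) + 2 * #M = Fintype.card V := by
  have hcompl : uncovered M = (M.biUnion Sym2.toFinset)ᶜ := by ext; simp [uncovered]
  have hcovered : #(M.biUnion Sym2.toFinset) = 2 * #M := by
    rw [card_biUnion hM.pairwiseDisjoint_toFinset,
      sum_congr rfl fun e he => Sym2.card_toFinset_of_not_isDiag e (hdiag e he), sum_const,
      smul_eq_mul, mul_comm]
  rw [hcompl, ← hcovered, card_compl_add_card]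

namespace SimpleGraph

variable (G : SimpleGraph V)

lemma not_adj_of_forall_notMem_of_maximum [Fintype V] [DecidableRel G.Adj]
    {M : Finset (Sym2 V)} (hMG : M ⊆ G.edgeFinset) (hM : PairwiseVertexDisjoint M)
    (hmax : ∀ M' ⊆ G.edgeFinset, PairwiseVertexDisjoint M' → #M' ≤ #M)
    {u v : V} (hu : ∀ e ∈ M, u ∉ e) (hv : ∀ e ∈ M, v ∉ e) : ¬ G.Adj u v := by
  intro huv
  have hnew : s(u, v) ∉ M := fun h => hu _ h (Sym2.mem_mk_left u v)
  have hsub : insert s(u, v) M ⊆ G.edgeFinset :=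
    insert_subset (mem_edgeFinset.mpr huv) hMG
  have := hmax _ hsub (hM.insert_mk hu hv)
  rw [card_insert_of_notMem hnew] at this
  omega

lemma exists_injective_adj_of_card_le_degree [G.LocallyFinite] (U : Finset V)
    (hU : ∀ u ∈ U, #U ≤ G.degree u) :
    ∃ f : U → V, Function.Injective f ∧ ∀ u : U, G.Adj u (f u) := by
  have hHall (s : Finset U) : #s ≤ #(s.biUnion fun u => G.neighborFinset u) := by
    obtain rfl | ⟨u, hu⟩ := s.eq_empty_or_nonempty
    · simp
    calc #s ≤ #U := by simpa using card_le_univ s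
      _ ≤ G.degree u := hU u u.2
      _ ≤ _ := card_le_card (subset_biUnion_of_mem (fun u : U => G.neighborFinset u) hu)
  obtain ⟨f, hf, hadj⟩ :=
    (all_card_le_biUnion_card_iff_exists_injective fun u : U => G.neighborFinset u).mp hHall
  exact ⟨f, hf, fun u => (G.mem_neighborFinset _ _).mp (hadj u)⟩

lemma pairwiseVertexDisjoint_image_mk {U : Finset V} {f : U → V} (hf : Function.Injective f)
    (hfU : ∀ u : U, f u ∉ U) : PairwiseVertexDisjoint (U.attach.image fun u => s(u.1, f u)) := by
  intro e he e' he' hne w hw hw'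
  simp only [coe_image, coe_attach, Set.image_univ, Set.mem_range] at he he'
  obtain ⟨u, rfl⟩ := he
  obtain ⟨u', rfl⟩ := he'
  have huu' : u ≠ u' := fun h => hne (h ▸ rfl)
  rcases Sym2.mem_iff.mp hw with rfl | rfl <;> rcases Sym2.mem_iff.mp hw' with h | h
  · exact huu' (Subtype.ext h)
  · exact hfU u' (h ▸ u.2)
  · exact hfU u (h ▸ u'.2)
  · exact huu' (hf h)

lemma exists_pairwiseVertexDisjoint_saturating [G.LocallyFinite] (U : Finset V)
    (hU : ∀ u ∈ U, #U ≤ G.degree u) (hind : ∀ u ∈ U, ∀ v ∈ U, ¬ G.Adj u v) :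
    ∃ M : Finset (Sym2 V), (∀ e ∈ M, e ∈ G.edgeSet) ∧ PairwiseVertexDisjoint M ∧
      (∀ e ∈ M, ∃ x ∈ U, ∃ y ∉ U, e = s(x, y)) ∧ ∀ u ∈ U, ∃ e ∈ M, u ∈ e := by
  obtain ⟨f, hf, hadj⟩ := G.exists_injective_adj_of_card_le_degree U hU
  have hfU (u : U) : f u ∉ U := fun h => hind u u.2 (f u) h (hadj u)
  refine ⟨U.attach.image fun u => s(u.1, f u), ?_, pairwiseVertexDisjoint_image_mk hf hfU, ?_, ?_⟩
  · simp only [mem_image, mem_attach, true_and, forall_exists_index, forall_apply_eq_imp_iff]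
    exact hadj
  · simp only [mem_image, mem_attach, true_and, forall_exists_index, forall_apply_eq_imp_iff]
    exact fun u => ⟨u, u.2, f u, hfU u, rfl⟩
  · exact fun u hu => ⟨s(u, f ⟨u, hu⟩),
    mem_image.mpr ⟨⟨u, hu⟩, mem_attach _ _, rfl⟩, Sym2.mem_mk_left _ _⟩

end SimpleGraph

theorem stmt_11_general {V : Type} [Fintype V] [DecidableEq V]
    (R : SimpleGraph V) [DecidableRel R.Adj]
    (t : ℕ) (ht : Fintype.card V = t)
    (α d : ℝ) (hd0 : 0 < d)
    (hα1 : 1 / 3 - d / 3 ≤ α)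
    (hδ : ∀ v : V, (α - 2 * d) * t ≤ (R.degree v : ℝ))
    (M1 : Finset (Sym2 V)) (hM1e : M1 ⊆ R.edgeFinset)
    (hM1m : (M1 : Set (Sym2 V)).Pairwise (fun e f => ∀ v : V, v ∈ e → v ∉ f))
    (hmax : ∀ M' : Finset (Sym2 V), M' ⊆ R.edgeFinset →
      ((M' : Set (Sym2 V)).Pairwise (fun e f => ∀ v : V, v ∈ e → v ∉ f)) →
      M'.card ≤ M1.card)
    (hM1card : (α + 2 * d) * t ≤ (M1.card : ℝ)) :
    (∀ u v : V, (∀ e ∈ M1, u ∉ e) → (∀ e ∈ M1, v ∉ e) → ¬ R.Adj u v) ∧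
    (((Finset.univ.filter (fun v : V => ∀ e ∈ M1, v ∉ e)).card : ℝ)
        ≤ (α - 3 * d) * t) ∧
    (∃ M2 : Finset (Sym2 V), M2 ⊆ R.edgeFinset ∧
      ((M2 : Set (Sym2 V)).Pairwise (fun e f => ∀ v : V, v ∈ e → v ∉ f)) ∧
      (∀ e ∈ M2, ∃ x y : V, e = s(x, y) ∧ (∀ f ∈ M1, x ∉ f) ∧ (∃ f ∈ M1, y ∈ f)) ∧
      (∀ v : V, (∀ e ∈ M1, v ∉ e) → ∃ e ∈ M2, v ∈ e)) := by
  have hind (u v : V) (hu : ∀ e ∈ M1, u ∉ e) (hv : ∀ e ∈ M1, v ∉ e) : ¬ R.Adj u v :=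
    R.not_adj_of_forall_notMem_of_maximum hM1e hM1m hmax hu hv
  have hsum : (#(uncovered M1) : ℝ) + 2 * #M1 = t := by
    have hdiag (e) (he : e ∈ M1) : ¬ e.IsDiag :=
      R.not_isDiag_of_mem_edgeSet (SimpleGraph.mem_edgeFinset.mp (hM1e he))
    rw [← ht]
    exact_mod_cast card_uncovered_add_two_mul_card hM1m hdiag
  have hsmall : (#(uncovered M1) : ℝ) ≤ (α - 3 * d) * t := by
    linarith [mul_le_mul_of_nonneg_right hα1 t.cast_nonneg]
  have hdeg (u : V) (_ : u ∈ uncovered M1) : #(uncovered M1) ≤ R.degree u := by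
    have : (α - 3 * d) * t ≤ (α - 2 * d) * t :=
      mul_le_mul_of_nonneg_right (by linarith) t.cast_nonneg
    exact_mod_cast hsmall.trans (this.trans (hδ u))
  obtain ⟨M2, hM2G, hM2m, hM2U, hM2cov⟩ := R.exists_pairwiseVertexDisjoint_saturating _ hdeg
    fun u hu v hv => hind u v (mem_uncovered.mp hu) (mem_uncovered.mp hv)
  refine ⟨hind, hsmall, M2, fun e he => SimpleGraph.mem_edgeFinset.mpr (hM2G e he), hM2m, ?_,
    fun v hv => hM2cov v (mem_uncovered.mpr hv)⟩
  intro e he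
  obtain ⟨x, hx, y, hy, rfl⟩ := hM2U e he
  simp only [mem_uncovered, not_forall, not_not, exists_prop] at hx hy
  exact ⟨x, y, rfl, hx, hy⟩

/-- Let `R` be a graph on `t` vertices with `δ(R) ≥ (α-2d)t`, where
`1/3 - d/3 ≤ α ≤ 1/3` and `d > 0` is small, and let `M₁` be a maximum matching
with `|M₁| ≥ (α+2d)t`. Then the set of uncovered vertices is independent, has
size at most `(α-3d)t`, and there is a matching `M₂`, each of whose edges joins
an uncovered vertex to a vertex of `V(M₁)`, covering all uncovered vertices. -/
theorem stmt_11 {V : Type} [Fintype V] [DecidableEq V]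
    (R : SimpleGraph V) [DecidableRel R.Adj]
    (t : ℕ) (ht : Fintype.card V = t)
    (α d : ℝ) (hd0 : 0 < d) (hdsmall : d ≤ 1 / 100)
    (hα1 : 1 / 3 - d / 3 ≤ α) (hα2 : α ≤ 1 / 3)
    (hδ : ∀ v : V, (α - 2 * d) * t ≤ (R.degree v : ℝ))
    (M1 : Finset (Sym2 V)) (hM1e : M1 ⊆ R.edgeFinset)
    (hM1m : (M1 : Set (Sym2 V)).Pairwise (fun e f => ∀ v : V, v ∈ e → v ∉ f))
    (hmax : ∀ M' : Finset (Sym2 V), M' ⊆ R.edgeFinset →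
      ((M' : Set (Sym2 V)).Pairwise (fun e f => ∀ v : V, v ∈ e → v ∉ f)) →
      M'.card ≤ M1.card)
    (hM1card : (α + 2 * d) * t ≤ (M1.card : ℝ)) :
    (∀ u v : V, (∀ e ∈ M1, u ∉ e) → (∀ e ∈ M1, v ∉ e) → ¬ R.Adj u v) ∧
    (((Finset.univ.filter (fun v : V => ∀ e ∈ M1, v ∉ e)).card : ℝ)
        ≤ (α - 3 * d) * t) ∧
    (∃ M2 : Finset (Sym2 V), M2 ⊆ R.edgeFinset ∧
      ((M2 : Set (Sym2 V)).Pairwise (fun e f => ∀ v : V, v ∈ e → v ∉ f)) ∧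
      (∀ e ∈ M2, ∃ x y : V, e = s(x, y) ∧ (∀ f ∈ M1, x ∉ f) ∧ (∃ f ∈ M1, y ∈ f)) ∧
      (∀ v : V, (∀ e ∈ M1, v ∉ e) → ∃ e ∈ M2, v ∈ e)) :=
  stmt_11_general R t ht α d hd0 hα1 hδ M1 hM1e hM1m hmax hM1card
end

section
/- Let $R$ be a graph and $M$ a maximum matching in $R$. Then the set $U = V(R) \setminus V(M)$ is independent, and for every edge $xy \in M$, at least one of $x$, $y$ has at most one neighbour in $U$. -/
/-!
Both claims say that a maximum matching admits no short augmenting path. Two adjacent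
uncovered vertices `u v` would give the larger matching `M ∪ {uv}`; if `xy ∈ M` and `x`, `y`
have uncovered neighbours `u ≠ v`, then replacing `xy` by `xu` and `yv` (the augmenting path
`u x y v`) would.
-/

open Finset

namespace SimpleGraph

variable {V : Type*} {G : SimpleGraph V} {M : Finset (Sym2 V)}

def IsMatchingFinset (G : SimpleGraph V) (M : Finset (Sym2 V)) : Prop :=
  (∀ e ∈ M, e ∈ G.edgeSet) ∧ (M : Set (Sym2 V)).Pairwise fun e f => ∀ v, v ∈ e → v ∉ f

def IsMaximumMatchingFinset (G : SimpleGraph V) (M : Finset (Sym2 V)) : Prop :=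
  G.IsMatchingFinset M ∧ ∀ M', G.IsMatchingFinset M' → M'.card ≤ M.card

lemma ne_of_forall_notMem {u w : V} {e : Sym2 V} (hu : ∀ f ∈ M, u ∉ f) (he : e ∈ M)
    (hw : w ∈ e) : u ≠ w :=
  fun h => hu e he (h ▸ hw)

lemma card_insert_mk_of_forall_notMem [DecidableEq V] {u v : V} (hu : ∀ f ∈ M, u ∉ f) :
    (insert s(u, v) M).card = M.card + 1 :=
  card_insert_of_notMem fun h => hu _ h (Sym2.mem_mk_left u v)

lemma forall_notMem_insert_mk [DecidableEq V] {a b w : V} :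
    (∀ f ∈ insert s(a, b) M, w ∉ f) ↔ w ≠ a ∧ w ≠ b ∧ ∀ f ∈ M, w ∉ f := by
  simp [Sym2.mem_iff, and_assoc]

namespace IsMatchingFinset

lemma erase [DecidableEq V] (hM : G.IsMatchingFinset M) (e : Sym2 V) :
    G.IsMatchingFinset (M.erase e) :=
  ⟨fun f hf => hM.1 f (mem_of_mem_erase hf),
    hM.2.mono (by simpa only [coe_erase] using Set.sdiff_subset)⟩

lemma insert [DecidableEq V] (hM : G.IsMatchingFinset M) {u v : V} (hadj : G.Adj u v)
    (hu : ∀ f ∈ M, u ∉ f) (hv : ∀ f ∈ M, v ∉ f) :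
    G.IsMatchingFinset (insert s(u, v) M) := by
  refine ⟨forall_mem_insert _ _ _ |>.mpr ⟨hadj, hM.1⟩, ?_⟩
  have hdisj : ∀ f ∈ M, ∀ w ∈ s(u, v), w ∉ f := fun f hf w hw => by
    rcases Sym2.mem_iff.mp hw with rfl | rfl
    exacts [hu f hf, hv f hf]
  rw [coe_insert, Set.pairwise_insert]
  exact ⟨hM.2, fun f hf _ => ⟨hdisj f hf, fun w hwf hw => hdisj f hf w hw hwf⟩⟩

lemma forall_notMem_erase (hM : G.IsMatchingFinset M) [DecidableEq V] {e : Sym2 V}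
    (he : e ∈ M) {w : V} (hw : w ∈ e) : ∀ f ∈ M.erase e, w ∉ f :=
  fun _ hf => hM.2 he (mem_of_mem_erase hf) (ne_of_mem_erase hf).symm w hw

end IsMatchingFinset

namespace IsMaximumMatchingFinset

lemma not_adj_of_forall_notMem [DecidableEq V] (hM : G.IsMaximumMatchingFinset M) {u v : V}
    (hu : ∀ f ∈ M, u ∉ f) (hv : ∀ f ∈ M, v ∉ f) : ¬ G.Adj u v := fun hadj => by
  have := hM.2 _ (hM.1.insert hadj hu hv)
  rw [card_insert_mk_of_forall_notMem hu] at this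
  omega

lemma eq_of_adj_of_adj [DecidableEq V] (hM : G.IsMaximumMatchingFinset M) {x y u v : V}
    (hxy : s(x, y) ∈ M) (hxu : G.Adj x u) (hyv : G.Adj y v)
    (hu : ∀ f ∈ M, u ∉ f) (hv : ∀ f ∈ M, v ∉ f) : u = v := by
  by_contra huv
  set M₀ := M.erase s(x, y)
  have hx₀ := hM.1.forall_notMem_erase hxy (Sym2.mem_mk_left x y)
  have hy₀ := hM.1.forall_notMem_erase hxy (Sym2.mem_mk_right x y)
  have hu₀ : ∀ f ∈ M₀, u ∉ f := fun f hf => hu f (mem_of_mem_erase hf)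
  have hv₀ : ∀ f ∈ M₀, v ∉ f := fun f hf => hv f (mem_of_mem_erase hf)
  have hvx := ne_of_forall_notMem hv hxy (Sym2.mem_mk_left x y)
  have huy := ne_of_forall_notMem hu hxy (Sym2.mem_mk_right x y)
  have hx₁ : ∀ f ∈ insert s(y, v) M₀, x ∉ f :=
    forall_notMem_insert_mk.mpr ⟨(hM.1.1 _ hxy).ne, hvx.symm, hx₀⟩
  have hu₁ : ∀ f ∈ insert s(y, v) M₀, u ∉ f := forall_notMem_insert_mk.mpr ⟨huy, huv, hu₀⟩
  have hmatch := ((hM.1.erase _).insert hyv hy₀ hv₀).insert hxu hx₁ hu₁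
  have hcard := hM.2 _ hmatch
  rw [card_insert_mk_of_forall_notMem hx₁, card_insert_mk_of_forall_notMem hy₀,
    card_erase_of_mem hxy] at hcard
  have := card_pos.mpr ⟨_, hxy⟩
  omega

end IsMaximumMatchingFinset

end SimpleGraph

open SimpleGraph

/-- If `M` is a maximum matching in `R`, then the set `U` of uncovered vertices
is independent, and for every edge `xy ∈ M`, at least one of `x`, `y` has at
most one neighbour in `U`. -/
theorem stmt_12 {V : Type} [Fintype V] [DecidableEq V]
    (R : SimpleGraph V) [DecidableRel R.Adj]
    (M : Finset (Sym2 V)) (hMe : M ⊆ R.edgeFinset)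
    (hMm : (M : Set (Sym2 V)).Pairwise (fun e f => ∀ v : V, v ∈ e → v ∉ f))
    (hmax : ∀ M' : Finset (Sym2 V), M' ⊆ R.edgeFinset →
      ((M' : Set (Sym2 V)).Pairwise (fun e f => ∀ v : V, v ∈ e → v ∉ f)) →
      M'.card ≤ M.card)
    (U : Finset V) (hU : ∀ v : V, v ∈ U ↔ ∀ e ∈ M, v ∉ e) :
    (∀ u ∈ U, ∀ v ∈ U, ¬ R.Adj u v) ∧
    (∀ x y : V, s(x, y) ∈ M →
      ((R.neighborFinset x) ∩ U).card ≤ 1 ∨ ((R.neighborFinset y) ∩ U).card ≤ 1) := by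
  have hM : R.IsMaximumMatchingFinset M :=
    ⟨⟨fun e he => R.mem_edgeFinset.mp (hMe he), hMm⟩,
      fun M' hM' => hmax M' (fun e he => R.mem_edgeFinset.mpr (hM'.1 e he)) hM'.2⟩
  refine ⟨fun u hu v hv => hM.not_adj_of_forall_notMem ((hU u).mp hu) ((hU v).mp hv),
    fun x y hxy => ?_⟩
  by_contra! h
  obtain ⟨u, hu⟩ := card_pos.mp (zero_lt_one.trans h.1)
  obtain ⟨v, hv, hvu⟩ := exists_mem_ne h.2 u
  rw [mem_inter, mem_neighborFinset, hU] at hu hv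
  exact hvu (hM.eq_of_adj_of_adj hxy hu.1 hv.1 hu.2 hv.2).symm
end

section
/- For any $d > 0$ there exists $\varepsilon > 0$ such that every $(\varepsilon,d)$-super-regular bipartite pair $(U,V)$ with $|U| = |V|$ contains a perfect matching. -/
/-!
Take `ε = d` and verify Hall's condition `|S| ≤ |N(S)|` for `S ⊆ U`, where `N(S) ⊆ V` is the
neighbourhood of `S`. If `|S| < d|U|`, a single vertex of `S` already has `d|V| = d|U|`
neighbours. Otherwise, were `|N(S)| < |S|`, the set `Y = V \ N(S)` would send no edge to `S`, so
regularity forces `|Y| < d|V|`; but then `|U \ S| < |Y| < d|U|`, so every vertex of `V` has a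
neighbour in `S`, i.e. `N(S) = V`, contradicting `|N(S)| < |S| ≤ |U| = |V|`.
-/

open Finset

theorem Finset.exists_injOn_of_forall_card_le_card_biUnion {α : Type*} [DecidableEq α]
    {U : Finset α} (t : α → Finset α) (hall : ∀ S ⊆ U, #S ≤ #(S.biUnion t)) :
    ∃ f : α → α, Set.InjOn f U ∧ ∀ u ∈ U, f u ∈ t u := by
  have hall' : ∀ s : Finset U, #s ≤ #(s.biUnion fun u => t u) := fun s => by
    simpa [card_image_of_injective _ Subtype.val_injective, image_biUnion] using
      hall (s.image Subtype.val) (image_subset_iff.mpr fun u _ => u.2)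
  obtain ⟨g, hg_inj, hg_mem⟩ :=
    (all_card_le_biUnion_card_iff_exists_injective fun u : U => t u).mp hall'
  have hextend (u : U) : Function.extend Subtype.val g id u.1 = g u :=
    Subtype.val_injective.extend_apply g id u
  refine ⟨Function.extend Subtype.val g id, fun x hx y hy hxy => ?_, fun u hu => ?_⟩
  · rw [hextend ⟨x, hx⟩, hextend ⟨y, hy⟩] at hxy
    exact congrArg Subtype.val (hg_inj hxy)
  · simpa [hextend ⟨u, hu⟩] using hg_mem ⟨u, hu⟩

theorem Finset.exists_bijOn_of_forall_card_le_card_biUnion {α : Type*} [DecidableEq α]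
    {U V : Finset α} (t : α → Finset α) (ht : ∀ u ∈ U, t u ⊆ V) (hcard : #U = #V)
    (hall : ∀ S ⊆ U, #S ≤ #(S.biUnion t)) :
    ∃ f : α → α, Set.InjOn f U ∧ (∀ u ∈ U, f u ∈ t u) ∧ ∀ v ∈ V, ∃ u ∈ U, f u = v := by
  obtain ⟨f, hf_inj, hf_mem⟩ := exists_injOn_of_forall_card_le_card_biUnion t hall
  have himage : U.image f = V :=
    eq_of_subset_of_card_le (image_subset_iff.mpr fun u hu => ht u hu (hf_mem u hu))
      (by rw [card_image_of_injOn hf_inj, hcard])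
  exact ⟨f, hf_inj, hf_mem, fun v hv => by simpa [← himage] using hv⟩

namespace SimpleGraph

variable {α : Type*} [Fintype α] [DecidableEq α] (G : SimpleGraph α) [DecidableRel G.Adj]

def neighborFinsetIn (V S : Finset α) : Finset α := S.biUnion fun u => G.neighborFinset u ∩ V

variable {G}

theorem mem_neighborFinsetIn {V S : Finset α} {v : α} :
    v ∈ G.neighborFinsetIn V S ↔ v ∈ V ∧ ∃ u ∈ S, G.Adj u v := by
  simp only [neighborFinsetIn, mem_biUnion, mem_inter, mem_neighborFinset]
  tauto

theorem neighborFinsetIn_subset (V S : Finset α) : G.neighborFinsetIn V S ⊆ V :=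
  fun _ hv => (mem_neighborFinsetIn.mp hv).1

theorem neighborFinset_inter_subset_neighborFinsetIn {V S : Finset α} {u : α} (hu : u ∈ S) :
    G.neighborFinset u ∩ V ⊆ G.neighborFinsetIn V S :=
  subset_biUnion_of_mem (fun u => G.neighborFinset u ∩ V) hu

theorem neighborFinset_inter_sdiff_neighborFinsetIn {V S : Finset α} {u : α} (hu : u ∈ S) :
    G.neighborFinset u ∩ (V \ G.neighborFinsetIn V S) = ∅ := by
  refine eq_empty_of_forall_notMem fun v hv => ?_
  simp only [mem_inter, mem_sdiff, mem_neighborFinset, mem_neighborFinsetIn] at hv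
  exact hv.2.2 ⟨hv.2.1, u, hu, hv.1⟩

theorem mem_neighborFinsetIn_of_card_sdiff_lt {U V S : Finset α} {v : α} (hv : v ∈ V)
    (h : #(U \ S) < #(G.neighborFinset v ∩ U)) : v ∈ G.neighborFinsetIn V S := by
  obtain ⟨u, hu, huS⟩ := exists_mem_notMem_of_card_lt_card h
  simp only [mem_inter, mem_neighborFinset, mem_sdiff, not_and, not_not] at hu huS
  exact mem_neighborFinsetIn.mpr ⟨hv, u, huS hu.2, hu.1.symm⟩

theorem exists_adj_of_density_pos {X Y : Finset α}
    (h : 0 < (∑ x ∈ X, (#(G.neighborFinset x ∩ Y) : ℝ)) / (#X * #Y)) :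
    ∃ x ∈ X, ∃ y ∈ Y, G.Adj x y := by
  contrapose! h
  have hzero : ∀ x ∈ X, (#(G.neighborFinset x ∩ Y) : ℝ) = 0 := fun x hx => by
    rw [Nat.cast_eq_zero, card_eq_zero]
    exact eq_empty_of_forall_notMem fun y hy => by
      rw [mem_inter, mem_neighborFinset] at hy
      exact h x hx y hy.2 hy.1
  rw [sum_eq_zero hzero, zero_div]

theorem card_le_card_neighborFinsetIn {U V : Finset α} {δ : ℝ} (hcard : #U = #V)
    (hedge : ∀ X ⊆ U, ∀ Y ⊆ V, δ * #U ≤ #X → δ * #V ≤ #Y → ∃ x ∈ X, ∃ y ∈ Y, G.Adj x y)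
    (hdegU : ∀ u ∈ U, δ * #V ≤ #(G.neighborFinset u ∩ V))
    (hdegV : ∀ v ∈ V, δ * #U ≤ #(G.neighborFinset v ∩ U))
    {S : Finset α} (hS : S ⊆ U) : #S ≤ #(G.neighborFinsetIn V S) := by
  set N := G.neighborFinsetIn V S
  by_contra! hN
  have hUV : (#U : ℝ) = #V := by exact_mod_cast hcard
  have hNS : (#N : ℝ) < #S := by exact_mod_cast hN
  by_cases hsmall : (#S : ℝ) < δ * #U
  · obtain ⟨u, hu⟩ : S.Nonempty := card_pos.mp (by omega)
    have : (#(G.neighborFinset u ∩ V) : ℝ) ≤ #N := by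
      exact_mod_cast card_le_card (neighborFinset_inter_subset_neighborFinsetIn hu)
    rw [hUV] at hsmall
    linarith [hdegU u (hS hu)]
  have hY : (#(V \ N) : ℝ) = #V - #N := by
    have hNV := neighborFinsetIn_subset (G := G) V S
    rw [card_sdiff_of_subset hNV, Nat.cast_sub (card_le_card hNV)]
  by_cases hlarge : δ * #V ≤ #(V \ N)
  · obtain ⟨x, hx, y, hy, hxy⟩ := hedge S hS (V \ N) sdiff_subset (not_lt.mp hsmall) hlarge
    have hempty := neighborFinset_inter_sdiff_neighborFinsetIn (G := G) (V := V) hx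
    exact eq_empty_iff_forall_notMem.mp hempty y
      (mem_inter.mpr ⟨(G.mem_neighborFinset x y).mpr hxy, hy⟩)
  have hVN : V ⊆ N := fun v hv => mem_neighborFinsetIn_of_card_sdiff_lt hv <| by
    have hUS : (#(U \ S) : ℝ) = #U - #S := by
      rw [card_sdiff_of_subset hS, Nat.cast_sub (card_le_card hS)]
    have hdeg := hdegV v hv
    rw [hUV] at hdeg
    have : (#(U \ S) : ℝ) < #(G.neighborFinset v ∩ U) := by linarith
    exact_mod_cast this
  have := card_le_card hVN
  have := card_le_card hS
  omega

end SimpleGraph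

/-- For any `d > 0` there exists `ε > 0` such that every `(ε,d)`-super-regular
bipartite pair `(U,V)` with `|U| = |V|` contains a perfect matching. -/
theorem stmt_14 (d : ℝ) (hd : 0 < d) :
    ∃ ε : ℝ, 0 < ε ∧
      ∀ {α : Type} [Fintype α] [DecidableEq α]
        (G : SimpleGraph α) [DecidableRel G.Adj] (U V : Finset α),
        Disjoint U V → U.card = V.card →
        (∀ X ⊆ U, ∀ Y ⊆ V, ε * U.card ≤ X.card → ε * V.card ≤ Y.card →
          d ≤ (∑ v ∈ X, (((G.neighborFinset v) ∩ Y).card : ℝ)) /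
            ((X.card : ℝ) * (Y.card : ℝ))) →
        (∀ u ∈ U, d * V.card ≤ (((G.neighborFinset u) ∩ V).card : ℝ)) →
        (∀ v ∈ V, d * U.card ≤ (((G.neighborFinset v) ∩ U).card : ℝ)) →
        ∃ f : α → α, Set.InjOn f U ∧ (∀ u ∈ U, f u ∈ V ∧ G.Adj u (f u)) ∧
          ∀ v ∈ V, ∃ u ∈ U, f u = v := by
  refine ⟨d, hd, fun {α} _ _ G _ U V _ hcard hdens hdegU hdegV => ?_⟩
  have hedge : ∀ X ⊆ U, ∀ Y ⊆ V, d * #U ≤ #X → d * #V ≤ #Y → ∃ x ∈ X, ∃ y ∈ Y, G.Adj x y :=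
    fun X hX Y hY hXc hYc =>
      SimpleGraph.exists_adj_of_density_pos (hd.trans_le (hdens X hX Y hY hXc hYc))
  obtain ⟨f, hf_inj, hf_mem, hf_surj⟩ :=
    exists_bijOn_of_forall_card_le_card_biUnion (fun u => G.neighborFinset u ∩ V)
      (fun _ _ => inter_subset_right) hcard
      (fun _ hS => SimpleGraph.card_le_card_neighborFinsetIn hcard hedge hdegU hdegV hS)
  refine ⟨f, hf_inj, fun u hu => ?_, hf_surj⟩
  obtain ⟨hadj, hfu⟩ := mem_inter.mp (hf_mem u hu)
  exact ⟨hfu, (G.mem_neighborFinset u _).mp hadj⟩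
end
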